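/- Let Γ be a group generated by a finite symmetric set S = S⁻¹ ⊆ Γ whose growth function satisfies γ_S(n−1) ≥ C·exp(b·n^α) for every integer n ≥ 1, where C, b > 0 and 0 < α ≤ 1 are real constants. Then for every integer n ≥ 1 such that b·n^α ≥ 1 and Føl(n) < ∞, the Følner function satisfies Føl(n) ≥ ( C / (α·b·n^α) ) · exp( b·n^α − 1/α ). -/

import Mathlib

/-!
If `D` is a Følner set, `n * |∂D| ≤ |D|`, then each generator moves at most `|∂D|` points of `D`
out of `D`, so an element `g` of the ball of radius `k` satisfies `|D \ g D| ≤ k |∂D| ≤ k |D| / n`.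
On the other hand the overlaps `|g D ∩ D|`, summed over any set of `g`, total at most `|D|²`.
Together these give `γ(k) (n - k) ≤ n |D|`; inserting the growth bound for `γ` and choosing `k`
with `b (k + 1) ^ α ≈ b n ^ α - 1 / α` yields the estimate.
-/

open scoped Pointwise

variable {G : Type*} [Group G] [DecidableEq G]

/-- The ball of radius `r` in the word metric: elements of `G` expressible as
a product of at most `r` elements of `S`. -/
def wordBall (S : Finset G) : ℕ → Finset G
  | 0 => {1}
  | r + 1 => wordBall S r ∪ S * wordBall S r

/-- The inner boundary of a finite set `D` with respect to the generating set `S`. -/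
def innerBoundary (S D : Finset G) : Finset G :=
  D.filter fun x => ∃ s ∈ S, s * x ∉ D

/-- The Følner function of `(G,S)`: the smallest cardinality of a finite nonempty
set `D` with `n·|∂_S D| ≤ |D|`, or `∞` if no such set exists. -/
noncomputable def folner (S : Finset G) (n : ℕ) : ℕ∞ :=
  ⨅ (D : Finset G) (_ : D.Nonempty) (_ : n * (innerBoundary S D).card ≤ D.card),
    (D.card : ℕ∞)

open Finset

namespace Finset

theorem card_sdiff_mul_smul_le (D : Finset G) (g h : G) :
    #(D \ (g * h) • D) ≤ #(D \ g • D) + #(D \ h • D) := by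
  calc #(D \ (g * h) • D) ≤ #(D \ g • D ∪ g • D \ g • h • D) := by
        rw [mul_smul]; exact card_le_card (sdiff_triangle _ _ _)
    _ ≤ #(D \ g • D) + #(g • (D \ h • D)) := by
        rw [smul_finset_sdiff]; exact card_union_le _ _
    _ = #(D \ g • D) + #(D \ h • D) := by rw [card_smul_finset]

theorem sum_card_smul_inter_le_sq (D T : Finset G) :
    ∑ g ∈ T, #(g • D ∩ D) ≤ #D ^ 2 := by
  have hfiber : ∀ x ∈ D, #(T.bipartiteBelow (fun g x => x ∈ g • D) x) ≤ #D := fun x _ =>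
    card_le_card_of_injOn (fun g => g⁻¹ * x)
      (fun g hg => by simpa [smul_eq_mul] using inv_smul_mem_iff.mpr (mem_filter.mp hg).2)
      (fun g _ h _ hgh => inv_injective (mul_right_cancel hgh))
  calc ∑ g ∈ T, #(g • D ∩ D)
      = ∑ g ∈ T, #(D.bipartiteAbove (fun g x => x ∈ g • D) g) := by
        refine sum_congr rfl fun g _ => congrArg card ?_
        ext x; simp [mem_bipartiteAbove, and_comm]
    _ = ∑ x ∈ D, #(T.bipartiteBelow (fun g x => x ∈ g • D) x) :=
        sum_card_bipartiteAbove_eq_sum_card_bipartiteBelow _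
    _ ≤ #D * #D := sum_le_card_nsmul _ _ _ hfiber
    _ = #D ^ 2 := (sq _).symm

end Finset

theorem sdiff_smul_subset_innerBoundary {S : Finset G} (hsymm : ∀ s ∈ S, s⁻¹ ∈ S)
    (D : Finset G) {s : G} (hs : s ∈ S) : D \ s • D ⊆ innerBoundary S D := by
  intro x hx
  rw [mem_sdiff, ← inv_smul_mem_iff] at hx
  exact mem_filter.mpr ⟨hx.1, s⁻¹, hsymm s hs, hx.2⟩

theorem card_sdiff_smul_le_of_mem_wordBall {S : Finset G} (hsymm : ∀ s ∈ S, s⁻¹ ∈ S)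
    (D : Finset G) {k : ℕ} {g : G} (hg : g ∈ wordBall S k) :
    #(D \ g • D) ≤ k * #(innerBoundary S D) := by
  induction k generalizing g with
  | zero => simp_all [wordBall]
  | succ k ih =>
    rcases mem_union.mp hg with hg | hg
    · exact (ih hg).trans (Nat.mul_le_mul_right _ k.le_succ)
    · obtain ⟨s, hs, w, hw, rfl⟩ := mem_mul.mp hg
      calc #(D \ (s * w) • D) ≤ #(D \ s • D) + #(D \ w • D) := card_sdiff_mul_smul_le D s w
        _ ≤ #(innerBoundary S D) + k * #(innerBoundary S D) :=
          add_le_add (card_le_card (sdiff_smul_subset_innerBoundary hsymm D hs)) (ih hw)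
        _ = (k + 1) * #(innerBoundary S D) := by ring

theorem card_wordBall_mul_card_le {S : Finset G} (hsymm : ∀ s ∈ S, s⁻¹ ∈ S) (D : Finset G)
    (k : ℕ) : #(wordBall S k) * #D ≤ #D ^ 2 + #(wordBall S k) * k * #(innerBoundary S D) := by
  calc #(wordBall S k) * #D = ∑ _g ∈ wordBall S k, #D := by rw [sum_const, smul_eq_mul]
    _ = ∑ g ∈ wordBall S k, (#(D \ g • D) + #(g • D ∩ D)) :=
        sum_congr rfl fun g _ => by rw [inter_comm, card_sdiff_add_card_inter]
    _ ≤ ∑ g ∈ wordBall S k, (k * #(innerBoundary S D) + #(g • D ∩ D)) :=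
        sum_le_sum fun g hg =>
          Nat.add_le_add_right (card_sdiff_smul_le_of_mem_wordBall hsymm D hg) _
    _ = #(wordBall S k) * k * #(innerBoundary S D) + ∑ g ∈ wordBall S k, #(g • D ∩ D) := by
        rw [sum_add_distrib, sum_const, smul_eq_mul, mul_assoc]
    _ ≤ #D ^ 2 + #(wordBall S k) * k * #(innerBoundary S D) := by
        rw [add_comm]; exact Nat.add_le_add_right (sum_card_smul_inter_le_sq D _) _

theorem card_wordBall_mul_sub_le {S : Finset G} (hsymm : ∀ s ∈ S, s⁻¹ ∈ S) {D : Finset G}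
    (hD : D.Nonempty) {n : ℕ} (hfol : n * #(innerBoundary S D) ≤ #D) (k : ℕ) :
    #(wordBall S k) * (n - k) ≤ n * #D := by
  have hcount := card_wordBall_mul_card_le hsymm D k
  have hscaled : n * #(wordBall S k) * #D ≤ (n * #D + #(wordBall S k) * k) * #D :=
    calc n * #(wordBall S k) * #D
        ≤ n * (#D ^ 2 + #(wordBall S k) * k * #(innerBoundary S D)) := by
          rw [mul_assoc]; exact Nat.mul_le_mul_left n hcount
      _ = n * #D * #D + #(wordBall S k) * k * (n * #(innerBoundary S D)) := by ring
      _ ≤ n * #D * #D + #(wordBall S k) * k * #D := by gcongr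
      _ = (n * #D + #(wordBall S k) * k) * #D := by ring
  have h := Nat.le_of_mul_le_mul_right hscaled hD.card_pos
  rw [Nat.mul_sub, mul_comm _ n]
  omega

theorem Real.exp_sub_inv_le_mul {α X : ℝ} (hα : 0 < α) (hX : 1 ≤ X) (hαX : α * X ≤ 1) :
    Real.exp (X - 1 / α) ≤ α * X := by
  have hαX0 : 0 < α * X := by positivity
  have hinv : (α * X)⁻¹ ≤ Real.exp (1 / α - X) :=
    calc (α * X)⁻¹ ≤ 1 / α - X + 1 := by
          have hexpand : (1 / α - X + 1) * (α * X) = 1 + (X - 1) * (1 - α * X) := by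
            field_simp; ring
          rw [inv_le_iff_one_le_mul₀ hαX0, hexpand]
          nlinarith [mul_nonneg (sub_nonneg.2 hX) (sub_nonneg.2 hαX)]
      _ ≤ Real.exp (1 / α - X) := Real.add_one_le_exp _
  rw [← neg_sub, Real.exp_neg]
  exact inv_le_of_inv_le₀ hαX0 hinv

theorem exists_nat_div_mul_exp_le {b α : ℝ} (hb : 0 < b) (hα0 : 0 < α) (hα1 : α ≤ 1)
    {n : ℕ} (hn : 1 ≤ n) (hbn : 1 ≤ b * (n : ℝ) ^ α) :
    ∃ r : ℕ, 1 ≤ r ∧ r ≤ n ∧ (n : ℝ) / (α * b * (n : ℝ) ^ α) *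
      Real.exp (b * (n : ℝ) ^ α - 1 / α) ≤ Real.exp (b * (r : ℝ) ^ α) * ((n : ℝ) - r + 1) := by
  have hn0 : (0 : ℝ) < n := by exact_mod_cast hn
  set X := b * (n : ℝ) ^ α with hX
  have hαX : α * b * (n : ℝ) ^ α = α * X := by rw [hX, mul_assoc]
  have hαX0 : 0 < α * X := by positivity
  rw [hαX]
  rcases le_or_gt (α * X) 1 with hsmall | hlarge
  · refine ⟨1, le_rfl, hn, ?_⟩
    calc (n : ℝ) / (α * X) * Real.exp (X - 1 / α)
        ≤ n / (α * X) * (α * X) := by gcongr; exact Real.exp_sub_inv_le_mul hα0 hbn hsmall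
      _ = n := div_mul_cancel₀ _ hαX0.ne'
      _ ≤ Real.exp (b * ((1 : ℕ) : ℝ) ^ α) * (n - (1 : ℕ) + 1) := by
        push_cast
        rw [sub_add_cancel]
        exact le_mul_of_one_le_left hn0.le (Real.one_le_exp (by positivity))
  · -- `u` is where `b u ^ α = X - 1/α`; rounding it up to an integer costs at most `1`.
    set y := (α * X)⁻¹ with hy
    have hy1 : y < 1 := inv_lt_one_of_one_lt₀ hlarge
    have hy0 : 0 ≤ y := inv_nonneg.2 hαX0.le
    have hXy : X * y = 1 / α := by rw [hy]; field_simp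
    have hroot : (1 - y) ^ (1 / α) ≤ 1 - y :=
      Real.rpow_le_self_of_le_one (by linarith) (by linarith) (by rw [le_div_iff₀ hα0]; linarith)
    set u := (n : ℝ) * (1 - y) ^ (1 / α) with hu
    have hu0 : 0 < u := mul_pos hn0 (Real.rpow_pos_of_pos (by linarith) _)
    have hun : u ≤ n * (1 - y) := mul_le_mul_of_nonneg_left hroot hn0.le
    have hbu : b * u ^ α = X - 1 / α := by
      rw [hu, Real.mul_rpow hn0.le (Real.rpow_nonneg (by linarith) _), ← Real.rpow_mul
        (by linarith), one_div_mul_cancel hα0.ne', Real.rpow_one]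
      linear_combination hX * (1 - y) - hXy
    refine ⟨⌈u⌉₊, Nat.one_le_iff_ne_zero.2 (Nat.ceil_pos.2 hu0).ne', Nat.ceil_le.2 ?_, ?_⟩
    · nlinarith
    calc (n : ℝ) / (α * X) * Real.exp (X - 1 / α) = Real.exp (b * u ^ α) * (n * y) := by
          rw [hbu, hy, div_eq_mul_inv]; ring
      _ ≤ Real.exp (b * (⌈u⌉₊ : ℝ) ^ α) * (n - ⌈u⌉₊ + 1) := by
          gcongr
          · exact Nat.le_ceil u
          · linarith [Nat.ceil_lt_add_one hu0.le]

theorem exists_card_le_of_folner_eq {S : Finset G} {n F : ℕ} (hF : folner S n = F) :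
    ∃ D : Finset G, D.Nonempty ∧ n * #(innerBoundary S D) ≤ #D ∧ #D ≤ F := by
  have hlt : folner S n < (F + 1 : ℕ) := by rw [hF]; exact_mod_cast F.lt_succ_self
  simpa only [folner, iInf_lt_iff, Nat.cast_lt, Nat.lt_succ_iff, exists_prop] using hlt

theorem stmt11_general (S : Finset G)
    (hsymm : ∀ s ∈ S, s⁻¹ ∈ S)
    (C b α : ℝ) (hC : 0 < C) (hb : 0 < b) (hα0 : 0 < α) (hα1 : α ≤ 1)
    (hgrowth : ∀ n : ℕ, 1 ≤ n →
      C * Real.exp (b * (n : ℝ) ^ α) ≤ ((wordBall S (n - 1)).card : ℝ))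
    (n : ℕ) (hn : 1 ≤ n) (hbn : 1 ≤ b * (n : ℝ) ^ α)
    (F : ℕ) (hF : folner S n = (F : ℕ∞)) :
    C / (α * b * (n : ℝ) ^ α) * Real.exp (b * (n : ℝ) ^ α - 1 / α) ≤ (F : ℝ) := by
  obtain ⟨D, hD, hfol, hDF⟩ := exists_card_le_of_folner_eq hF
  obtain ⟨r, hr1, hrn, hr⟩ := exists_nat_div_mul_exp_le hb hα0 hα1 hn hbn
  obtain ⟨k, rfl⟩ := Nat.exists_eq_add_of_le' hr1
  have hkn : ((n - k : ℕ) : ℝ) = n - k := Nat.cast_sub (by omega)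
  have hball : (#(wordBall S k) : ℝ) * (n - k) ≤ n * #D := by
    rw [← hkn]; exact_mod_cast card_wordBall_mul_sub_le hsymm hD hfol k
  have hgrow : C * Real.exp (b * ((k + 1 : ℕ) : ℝ) ^ α) ≤ #(wordBall S k) := hgrowth (k + 1) hr1
  rw [show (n : ℝ) - (k + 1 : ℕ) + 1 = n - k by push_cast; ring] at hr
  refine le_of_mul_le_mul_left ?_ (by exact_mod_cast hn : (0 : ℝ) < n)
  calc (n : ℝ) * (C / (α * b * (n : ℝ) ^ α) * Real.exp (b * (n : ℝ) ^ α - 1 / α))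
      = C * ((n : ℝ) / (α * b * (n : ℝ) ^ α) * Real.exp (b * (n : ℝ) ^ α - 1 / α)) := by ring
    _ ≤ C * Real.exp (b * ((k + 1 : ℕ) : ℝ) ^ α) * (n - k) :=
        (mul_le_mul_of_nonneg_left hr hC.le).trans_eq (mul_assoc _ _ _).symm
    _ ≤ #(wordBall S k) * (n - k) := by
        refine mul_le_mul_of_nonneg_right hgrow ?_
        rw [← hkn]; exact Nat.cast_nonneg _
    _ ≤ n * F := hball.trans (by gcongr)

theorem stmt11 (S : Finset G)
    (hsymm : ∀ s ∈ S, s⁻¹ ∈ S) (hgen : Subgroup.closure (S : Set G) = ⊤)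
    (C b α : ℝ) (hC : 0 < C) (hb : 0 < b) (hα0 : 0 < α) (hα1 : α ≤ 1)
    (hgrowth : ∀ n : ℕ, 1 ≤ n →
      C * Real.exp (b * (n : ℝ) ^ α) ≤ ((wordBall S (n - 1)).card : ℝ))
    (n : ℕ) (hn : 1 ≤ n) (hbn : 1 ≤ b * (n : ℝ) ^ α)
    (F : ℕ) (hF : folner S n = (F : ℕ∞)) :
    C / (α * b * (n : ℝ) ^ α) * Real.exp (b * (n : ℝ) ^ α - 1 / α) ≤ (F : ℝ) :=
  stmt11_general S hsymm C b α hC hb hα0 hα1 hgrowth n hn hbn F hF
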